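/- arXiv:2501.13918 — 2 statements merged into one kernel-verified Lean document; each statement's English description precedes it below -/
import Mathlib

section
/- Let X be a nonempty finite type, p_ref : X → ℝ with p_ref(x) > 0 for all x and ∑_x p_ref(x) = 1, r : X → ℝ, and β > 0. Define Z := ∑_x p_ref(x)·exp(r(x)/β) and p*(x) := p_ref(x)·exp(r(x)/β)/Z. Then for every p : X → ℝ with p(x) ≥ 0 for all x and ∑_x p(x) = 1: ∑_x p(x)·r(x) − β·∑_x p(x)·log(p(x)/p_ref(x)) = β·log Z − β·∑_x p(x)·log(p(x)/p*(x)). -/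
open scoped BigOperators

noncomputable def pstar {X : Type*} [Fintype X] (p_ref r : X → ℝ) (β : ℝ) (x : X) : ℝ :=
  p_ref x * Real.exp (r x / β) / ∑ y, p_ref y * Real.exp (r y / β)

theorem stmt_11 {X : Type*} [Fintype X] [Nonempty X]
    (p_ref : X → ℝ) (hpos : ∀ x, 0 < p_ref x) (hsum : ∑ x, p_ref x = 1)
    (r : X → ℝ) (β : ℝ) (hβ : 0 < β)
    (p : X → ℝ) (hp : ∀ x, 0 ≤ p x) (hps : ∑ x, p x = 1) :
    ∑ x, p x * r x - β * ∑ x, p x * Real.log (p x / p_ref x) =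
      β * Real.log (∑ y, p_ref y * Real.exp (r y / β)) -
        β * ∑ x, p x * Real.log (p x / pstar p_ref r β x) := by
  set Z : ℝ := ∑ y, p_ref y * Real.exp (r y / β) with hZ
  have hZpos : 0 < Z :=
    Finset.sum_pos (fun y _ => mul_pos (hpos y) (Real.exp_pos _)) Finset.univ_nonempty
  have key : ∀ x, p x * Real.log (p x / pstar p_ref r β x)
      = p x * Real.log (p x / p_ref x) - p x * (r x / β) + p x * Real.log Z := by
    intro x
    rcases eq_or_lt_of_le (hp x) with h | h
    · simp [← h]
    · have hpr := hpos x
      have hexp := Real.exp_pos (r x / β)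
      unfold pstar
      rw [← hZ, div_div_eq_mul_div,
        Real.log_div (by positivity) (by positivity),
        Real.log_mul (by positivity) hZpos.ne',
        Real.log_mul hpr.ne' hexp.ne', Real.log_exp,
        Real.log_div h.ne' hpr.ne']
      ring
  rw [Finset.sum_congr rfl (fun x _ => key x)]
  rw [Finset.sum_add_distrib, Finset.sum_sub_distrib, ← Finset.sum_mul, hps]
  have : ∑ x, p x * (r x / β) = (∑ x, p x * r x) / β := by
    rw [Finset.sum_div]; exact Finset.sum_congr rfl fun x _ => (mul_div_assoc _ _ _).symm
  rw [this]
  field_simp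
  ring
end

section
/- Let E = EuclideanSpace ℝ (Fin d), t ∈ [0,1), β ∈ ℝ, and let x0w, x0l, ε ∈ E. Set xtw := (1−t)·x0w + t·ε, xtl := (1−t)·x0l + t·ε, vw := ε − x0w, vl := ε − x0l. Let vθw, vrefw, vθl, vrefl ∈ E be arbitrary velocity predictions, and define the corresponding noise predictions εθw := xtw + (1−t)·vθw, εrefw := xtw + (1−t)·vrefw, εθl := xtl + (1−t)·vθl, εrefl := xtl + (1−t)·vrefl. Then −(β/2)·( (‖ε − εθw‖² − ‖ε − εrefw‖²) − (‖ε − εθl‖² − ‖ε − εrefl‖²) ) = −(β·(1−t)²/2)·( (‖vw − vθw‖² − ‖vw − vrefw‖²) − (‖vl − vθl‖² − ‖vl − vrefl‖²) ). -/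
lemma aux14 {d : ℕ} (t : ℝ) (x0 ε v : EuclideanSpace ℝ (Fin d)) :
    ‖ε - (((1 - t) • x0 + t • ε) + (1 - t) • v)‖ ^ 2
      = (1 - t) ^ 2 * ‖(ε - x0) - v‖ ^ 2 := by
  have h : ε - (((1 - t) • x0 + t • ε) + (1 - t) • v) = (1 - t) • ((ε - x0) - v) := by
    simp [smul_sub, sub_smul, one_smul]
    abel
  rw [h, norm_smul, mul_pow, Real.norm_eq_abs, sq_abs]

theorem stmt_14 (d : ℕ) (t : ℝ) (ht : t ∈ Set.Ico (0 : ℝ) 1) (β : ℝ)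
    (x0w x0l ε vθw vrefw vθl vrefl : EuclideanSpace ℝ (Fin d)) :
    -(β / 2) *
        ((‖ε - (((1 - t) • x0w + t • ε) + (1 - t) • vθw)‖ ^ 2 -
            ‖ε - (((1 - t) • x0w + t • ε) + (1 - t) • vrefw)‖ ^ 2) -
          (‖ε - (((1 - t) • x0l + t • ε) + (1 - t) • vθl)‖ ^ 2 -
            ‖ε - (((1 - t) • x0l + t • ε) + (1 - t) • vrefl)‖ ^ 2)) =
      -(β * (1 - t) ^ 2 / 2) *
        ((‖(ε - x0w) - vθw‖ ^ 2 - ‖(ε - x0w) - vrefw‖ ^ 2) -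
          (‖(ε - x0l) - vθl‖ ^ 2 - ‖(ε - x0l) - vrefl‖ ^ 2)) := by
  rw [aux14, aux14, aux14, aux14]
  ring
end
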